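/- Let G be a finite simple graph, let R and S be disjoint subsets of V(G), and let T = R ∪ S. For every T-signature σ_T the following equivalence holds: there exists a valid partial b-coloring of G[T] with k colors whose T-signature is σ_T if and only if there exist an R-signature σ_R and an S-signature σ_S such that the triple (σ_T, σ_R, σ_S) is compatible, there exists a valid partial b-coloring of G[R] with k colors whose R-signature is σ_R, and there exists a valid partial b-coloring of G[S] with k colors whose S-signature is σ_S. -/

import Mathlib

open scoped Classical

namespace BCol

/-- The three possible descriptions of a color class on an equivalence class:
`none`, `contains`, or `demand`. -/
inductive Desc where
  | none
  | contains
  | demand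
deriving DecidableEq

variable {V : Type*}

/-- The neighborhood of `v` outside of `U`, i.e. `N_G(v) \ U`. -/
def extN (G : SimpleGraph V) (U : Set V) (v : V) : Set V := G.neighborSet v \ U

/-- The `~_U`-equivalence class of `u`: the vertices of `U` with the same
neighborhood outside of `U` as `u`. -/
def cls (G : SimpleGraph V) (U : Set V) (u : V) : Set V :=
  {v | v ∈ U ∧ extN G U v = extN G U u}

/-- The set of equivalence classes `U/~_U`. -/
def eqClasses (G : SimpleGraph V) (U : Set V) : Set (Set V) :=
  {Q | ∃ u ∈ U, Q = cls G U u}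

/-- The equivalence classes of `~_U`, as a type. -/
abbrev Classes (G : SimpleGraph V) (U : Set V) := {Q // Q ∈ eqClasses G U}

/-- A `U`-type: a pair of a map `U/~_U → {none, contains, demand}` and a bit. -/
abbrev UType (G : SimpleGraph V) (U : Set V) := (Classes G U → Desc) × Bool

/-- The neighborhood of `v` in the induced subgraph `G[U]`. -/
def indN (G : SimpleGraph V) (U : Set V) (v : V) : Set V := G.neighborSet v ∩ U

/-- `C` is an independent set of the induced subgraph `G[U]`. -/
def IndepIn (G : SimpleGraph V) (U C : Set V) : Prop :=
  C ⊆ U ∧ ∀ u ∈ C, ∀ v ∈ C, ¬ G.Adj u v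

/-- The `desc`-component of the `U`-type of the color class `C` relative to the set `B`
of partial `b`-vertices. -/
noncomputable def descOf (G : SimpleGraph V) (U B C : Set V) (Q : Classes G U) : Desc :=
  if (Q.1 ∩ C).Nonempty then Desc.contains
  else if ∃ v ∈ B ∩ Q.1, indN G U v ∩ C = ∅ then Desc.demand
  else Desc.none

/-- The `U`-type of the color class `C` relative to the set `B` of partial `b`-vertices. -/
noncomputable def typeOf (G : SimpleGraph V) (U B C : Set V) : UType G U :=
  (descOf G U B C, if (C ∩ B).Nonempty then true else false)

/-- `C` is valid relative to `B`: there is no class `Q ∈ U/~_U` intersecting `C` such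
that some `v ∈ B ∩ Q` has closed neighborhood in `G[U]` disjoint from `C`. -/
def ValidClass (G : SimpleGraph V) (U B C : Set V) : Prop :=
  ¬ ∃ Q ∈ eqClasses G U, (Q ∩ C).Nonempty ∧
      ∃ v ∈ B ∩ Q, (insert v (indN G U v)) ∩ C = ∅

/-- `Q_R Q_S ∈ E(H)`: every vertex of `Q_R` is adjacent to every vertex of `Q_S`. -/
def OpEdge (G : SimpleGraph V) (QR QS : Set V) : Prop :=
  ∀ u ∈ QR, ∀ v ∈ QS, G.Adj u v

/-- An `R`-type `ρ` and an `S`-type `σ` are compatible. -/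
def CompatibleTypes (G : SimpleGraph V) (R S : Set V)
    (ρ : UType G R) (σ : UType G S) : Prop :=
  (¬ (ρ.2 = true ∧ σ.2 = true)) ∧
  (¬ ∃ (QR : Classes G R) (QS : Classes G S),
      OpEdge G QR.1 QS.1 ∧ ρ.1 QR = Desc.contains ∧ σ.1 QS = Desc.contains) ∧
  (∀ Q : Classes G (R ∪ S),
    ((∃ QR : Classes G R, QR.1 ⊆ Q.1 ∧ ρ.1 QR = Desc.contains) ∨
     (∃ QS : Classes G S, QS.1 ⊆ Q.1 ∧ σ.1 QS = Desc.contains)) →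
    ((∀ QR : Classes G R, QR.1 ⊆ Q.1 → ρ.1 QR = Desc.demand →
        ∃ QS : Classes G S, σ.1 QS = Desc.contains ∧ OpEdge G QR.1 QS.1) ∧
     (∀ QS : Classes G S, QS.1 ⊆ Q.1 → σ.1 QS = Desc.demand →
        ∃ QR : Classes G R, ρ.1 QR = Desc.contains ∧ OpEdge G QR.1 QS.1)))

/-- The merge type of an `R`-type `ρ` and an `S`-type `σ`. -/
noncomputable def mergeType (G : SimpleGraph V) (R S : Set V)
    (ρ : UType G R) (σ : UType G S) : UType G (R ∪ S) :=
  (fun Q =>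
    if (∃ QR : Classes G R, QR.1 ⊆ Q.1 ∧ ρ.1 QR = Desc.contains) ∨
       (∃ QS : Classes G S, QS.1 ⊆ Q.1 ∧ σ.1 QS = Desc.contains) then
      Desc.contains
    else if (∃ QR : Classes G R, QR.1 ⊆ Q.1 ∧ ρ.1 QR = Desc.demand ∧
              ∀ QS : Classes G S, OpEdge G QR.1 QS.1 → σ.1 QS ≠ Desc.contains) ∨
            (∃ QS : Classes G S, QS.1 ⊆ Q.1 ∧ σ.1 QS = Desc.demand ∧
              ∀ QR : Classes G R, OpEdge G QR.1 QS.1 → ρ.1 QR ≠ Desc.contains) then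
      Desc.demand
    else Desc.none,
   ρ.2 || σ.2)

/-- `((C_1, …, C_k), B)` is a partial `b`-coloring of `G[U]` with `k` colors:
the `C_i` partition `U` into independent sets of `G[U]`, `B ⊆ U`, and each color class
contains at most one vertex of `B`. -/
def IsPartialBColoring (G : SimpleGraph V) (U : Set V) {k : ℕ}
    (C : Fin k → Set V) (B : Set V) : Prop :=
  (⋃ i, C i) = U ∧ (Pairwise fun i j => Disjoint (C i) (C j)) ∧
  (∀ i, IndepIn G U (C i)) ∧ B ⊆ U ∧ ∀ i, (C i ∩ B).Subsingleton

/-- A valid partial `b`-coloring of `G[U]`: every color class is valid relative to `B`. -/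
def IsValidPartialBColoring (G : SimpleGraph V) (U : Set V) {k : ℕ}
    (C : Fin k → Set V) (B : Set V) : Prop :=
  IsPartialBColoring G U C B ∧ ∀ i, ValidClass G U B (C i)

/-- The `U`-signature of the partial `b`-coloring `(C, B)`: to each `U`-type `τ` it
assigns the number of color classes whose `U`-type relative to `B` is `τ`. -/
noncomputable def sigOf (G : SimpleGraph V) (U : Set V) {k : ℕ}
    (C : Fin k → Set V) (B : Set V) : UType G U → ℕ :=
  fun τ => Nat.card {i : Fin k // typeOf G U B (C i) = τ}

/-- `σ` is a `U`-signature for `k` colors: the values of `σ` sum up to `k`. -/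
def IsSignature (G : SimpleGraph V) (U : Set V) (k : ℕ) (σ : UType G U → ℕ) : Prop :=
  ∑ᶠ τ, σ τ = k

/-- A triple `(σT, σR, σS)` of signatures is compatible: there is an assignment `f` of
natural numbers to the edges of the merge skeleton (i.e. to the compatible pairs of an
`R`-type and an `S`-type) such that the sums of `f` over the edges incident to each
`R`-type `ρ`, to each `S`-type `σ`, and over the edges labeled by each merge type `τ`
are `σR ρ`, `σS σ`, and `σT τ`, respectively. -/
def CompatibleSignatures (G : SimpleGraph V) (R S : Set V)
    (σT : UType G (R ∪ S) → ℕ) (σR : UType G R → ℕ) (σS : UType G S → ℕ) : Prop :=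
  ∃ f : UType G R × UType G S → ℕ,
    (∀ p, ¬ CompatibleTypes G R S p.1 p.2 → f p = 0) ∧
    (∀ ρ, ∑ᶠ σ, f (ρ, σ) = σR ρ) ∧
    (∀ σ, ∑ᶠ ρ, f (ρ, σ) = σS σ) ∧
    (∀ τ, ∑ᶠ p ∈ {p : UType G R × UType G S | mergeType G R S p.1 p.2 = τ}, f p = σT τ)

/-!
A color class `C` of `G[R ∪ S]` is the union of its traces `C ∩ R` and `C ∩ S`. Adjacency
between `R` and `S` is constant on pairs of classes of `~_R` and `~_S`, so the `(R ∪ S)`-type of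
`C` is the merge type of the types of its traces, and `C` is independent and valid exactly when
both traces are and their types are compatible. Hence a valid coloring of `G[R ∪ S]` restricts
to valid colorings of `G[R]` and `G[S]`, and counting the pairs of trace types gives the
required assignment `f`. Conversely, `f` prescribes how many colors of each compatible pair of
types to form; since its marginals are the two signatures, a permutation of the colors of the
`S`-coloring matches the color classes accordingly, and the pairwise unions form the coloring.
-/

section Fibers

variable {ι ι' α β γ : Type*} [Fintype ι]

lemma finsum_card_and_eq [Finite β] (P : ι → Prop) (g : ι → β) :
    ∑ᶠ b, Nat.card {i // P i ∧ g i = b} = Nat.card {i // P i} := by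
  classical
  have := Fintype.ofFinite β
  simp only [finsum_eq_sum_of_fintype, Nat.card_eq_fintype_card, Fintype.card_subtype]
  rw [Finset.card_eq_sum_card_fiberwise (f := g) (t := Finset.univ) (by simp)]
  simp only [Finset.filter_filter]

lemma finsum_mem_card_fiber [Finite β] (g : ι → β) (h : β → γ) (c : γ) :
    ∑ᶠ b ∈ {b | h b = c}, Nat.card {i // g i = b} = Nat.card {i // h (g i) = c} := by
  rw [← finsum_card_and_eq (fun i => h (g i) = c) g, finsum_mem_def]
  refine finsum_congr fun b => ?_
  by_cases hb : h b = c
  · rw [Set.indicator_of_mem (s := {b | h b = c}) hb]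
    exact Nat.card_congr <|
      Equiv.subtypeEquivRight fun i => ⟨fun hi => ⟨hi ▸ hb, hi⟩, And.right⟩
  · have : IsEmpty {i // h (g i) = c ∧ g i = b} := ⟨fun ⟨_, hi, hib⟩ => hb (hib ▸ hi)⟩
    rw [Set.indicator_of_notMem (s := {b | h b = c}) hb, Nat.card_of_isEmpty]

lemma exists_equiv_comp_eq_of_card_fiber_eq [Finite ι'] (a : ι → α) (a' : ι' → α)
    (h : ∀ x, Nat.card {i // a i = x} = Nat.card {i // a' i = x}) :
    ∃ e : ι ≃ ι', ∀ i, a' (e i) = a i :=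
  ⟨Equiv.ofFiberEquiv fun x => (Finite.card_eq.mp (h x)).some, Equiv.ofFiberEquiv_map _⟩

lemma exists_perm_card_fiber_pair_eq [Finite α] [Finite β] (a : ι → α) (b : ι → β)
    (f : α × β → ℕ) (ha : ∀ x, ∑ᶠ y, f (x, y) = Nat.card {i // a i = x})
    (hb : ∀ y, ∑ᶠ x, f (x, y) = Nat.card {i // b i = y}) :
    ∃ π : ι ≃ ι, ∀ p, Nat.card {i // (a i, b (π i)) = p} = f p := by
  classical
  have := Fintype.ofFinite α
  have := Fintype.ofFinite β
  have htotal : ∑ p, f p = Fintype.card ι := by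
    rw [Fintype.sum_prod_type]
    simp_rw [← finsum_eq_sum_of_fintype, ha]
    simpa using finsum_card_and_eq (fun _ => True) a
  obtain ⟨E⟩ : Nonempty (ι ≃ Σ p, Fin (f p)) :=
    ⟨Fintype.equivOfCardEq (by simp [htotal])⟩
  -- `c` lays out `f p` slots for each pair `p`; the colors of `a` and of `b` are then
  -- assigned to these slots fiber by fiber.
  set c : ι → α × β := fun i => (E i).1
  have hc : ∀ p, Nat.card {i // c i = p} = f p := fun p => by
    simpa using Nat.card_congr ((E.subtypeEquiv fun i => Iff.rfl).trans (Equiv.sigmaSubtype p))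
  obtain ⟨e₁, he₁⟩ := exists_equiv_comp_eq_of_card_fiber_eq a (fun i => (c i).1) fun x => by
    rw [← ha, ← finsum_card_and_eq (fun i => (c i).1 = x) (fun i => (c i).2)]
    simp_rw [← hc, Prod.ext_iff]
  obtain ⟨e₂, he₂⟩ := exists_equiv_comp_eq_of_card_fiber_eq b (fun i => (c i).2) fun y => by
    rw [← hb, ← finsum_card_and_eq (fun i => (c i).2 = y) (fun i => (c i).1)]
    simp_rw [← hc, Prod.ext_iff, and_comm]
  refine ⟨e₁.trans e₂.symm, fun p => ?_⟩
  have hpair : ∀ i, (a i, b (e₂.symm (e₁ i))) = c (e₁ i) := fun i => by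
    rw [← he₁ i, ← he₂ (e₂.symm (e₁ i)), Equiv.apply_symm_apply]
  rw [← hc p]
  exact Nat.card_congr (e₁.subtypeEquiv fun i => by simp [hpair])

end Fibers

instance : Fintype Desc :=
  ⟨{Desc.none, Desc.contains, Desc.demand}, by intro x; cases x <;> simp⟩

section Classes

variable {G : SimpleGraph V} {U B C R S Q : Set V} {u v w : V}

lemma mem_cls_self (hu : u ∈ U) : u ∈ cls G U u := ⟨hu, rfl⟩

lemma cls_mem_eqClasses (hu : u ∈ U) : cls G U u ∈ eqClasses G U := ⟨u, hu, rfl⟩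

lemma eq_cls_of_mem (hQ : Q ∈ eqClasses G U) (hv : v ∈ Q) : Q = cls G U v := by
  obtain ⟨u, -, rfl⟩ := hQ
  simp only [cls, hv.2]

lemma cls_subset_cls_union (u : V) : cls G R u ⊆ cls G (R ∪ S) u := fun v hv =>
  ⟨Or.inl hv.1, by simp only [extN, ← Set.sdiff_sdiff]; exact congrArg (· \ S) hv.2⟩

lemma adj_of_mem_cls (hv : v ∈ cls G U u) (hw : w ∉ U) (h : G.Adj u w) : G.Adj v w := by
  have : w ∈ extN G U v := hv.2 ▸ ⟨h, hw⟩
  exact this.1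

lemma opEdge_comm {A A' : Set V} : OpEdge G A A' ↔ OpEdge G A' A :=
  ⟨fun h u hu v hv => (h v hv u hu).symm, fun h u hu v hv => (h v hv u hu).symm⟩

lemma opEdge_cls_of_adj (hRS : Disjoint R S) (hv : v ∈ S) (h : G.Adj u v) :
    OpEdge G (cls G R u) (cls G S v) := fun _ hu' _ hv' =>
  (adj_of_mem_cls hv' (hRS.notMem_of_mem_left hu'.1)
    (adj_of_mem_cls hu' (hRS.notMem_of_mem_right hv) h).symm).symm

lemma indN_inter_eq_empty_iff (hC : C ⊆ U) :
    indN G U v ∩ C = ∅ ↔ ∀ w ∈ C, ¬ G.Adj v w := by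
  simp only [indN, Set.eq_empty_iff_forall_notMem, Set.mem_inter_iff, SimpleGraph.mem_neighborSet]
  exact ⟨fun h w hw hvw => h w ⟨⟨hvw, hC hw⟩, hw⟩, fun h w hw => h w hw.2 hw.1.1⟩

lemma typeOf_fst : (typeOf G U B C).1 = descOf G U B C := rfl

lemma typeOf_snd_eq_true_iff :
    (typeOf G U B C).2 = true ↔ (C ∩ B).Nonempty := by
  simp only [typeOf]
  split_ifs <;> simp_all

lemma descOf_eq_contains_iff {Q : Classes G U} :
    descOf G U B C Q = Desc.contains ↔ (Q.1 ∩ C).Nonempty := by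
  unfold descOf
  split_ifs <;> simp_all

lemma descOf_eq_demand_iff (hC : C ⊆ U) {Q : Classes G U} :
    descOf G U B C Q = Desc.demand ↔
      ¬ (Q.1 ∩ C).Nonempty ∧ ∃ v ∈ B ∩ Q.1, ∀ w ∈ C, ¬ G.Adj v w := by
  simp_rw [← indN_inter_eq_empty_iff hC]
  unfold descOf
  split_ifs <;> simp_all

lemma validClass_iff (hC : C ⊆ U) :
    ValidClass G U B C ↔
      ∀ Q ∈ eqClasses G U, (Q ∩ C).Nonempty →
        ∀ v ∈ B ∩ Q, v ∈ C ∨ ∃ w ∈ C, G.Adj v w := by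
  have hins (v : V) :
      insert v (indN G U v) ∩ C = ∅ ↔ ¬ (v ∈ C ∨ ∃ w ∈ C, G.Adj v w) := by
    simp only [Set.eq_empty_iff_forall_notMem, indN, Set.mem_inter_iff, Set.mem_insert_iff]
    constructor
    · rintro h (hv | ⟨w, hw, hvw⟩)
      exacts [h v ⟨Or.inl rfl, hv⟩, h w ⟨Or.inr ⟨hvw, hC hw⟩, hw⟩]
    · rintro h x ⟨rfl | ⟨hvx, -⟩, hx⟩
      exacts [h (Or.inl hx), h (Or.inr ⟨x, hx, hvx⟩)]
  simp only [ValidClass, hins, not_exists, not_and, not_not]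

end Classes

section Merge

variable {G : SimpleGraph V} {R S BR BS CR CS Q : Set V} {v : V}

lemma inter_nonempty_iff_exists_descOf_contains (hCR : CR ⊆ R)
    (hQ : Q ∈ eqClasses G (R ∪ S)) :
    (Q ∩ CR).Nonempty ↔
      ∃ QR : Classes G R, QR.1 ⊆ Q ∧ descOf G R BR CR QR = Desc.contains := by
  simp only [descOf_eq_contains_iff]
  constructor
  · rintro ⟨x, hxQ, hxC⟩
    exact ⟨⟨cls G R x, cls_mem_eqClasses (hCR hxC)⟩,
      eq_cls_of_mem hQ hxQ ▸ cls_subset_cls_union x, x, mem_cls_self (hCR hxC), hxC⟩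
  · rintro ⟨QR, hQR, x, hxQ, hxC⟩
    exact ⟨x, hQR hxQ, hxC⟩

lemma union_inter_nonempty_iff (hCR : CR ⊆ R) (hCS : CS ⊆ S)
    (hQ : Q ∈ eqClasses G (R ∪ S)) :
    (Q ∩ (CR ∪ CS)).Nonempty ↔
      (∃ QR : Classes G R, QR.1 ⊆ Q ∧ descOf G R BR CR QR = Desc.contains) ∨
      (∃ QS : Classes G S, QS.1 ⊆ Q ∧ descOf G S BS CS QS = Desc.contains) := by
  rw [Set.inter_union_distrib_left, Set.union_nonempty,
    inter_nonempty_iff_exists_descOf_contains hCR hQ,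
    inter_nonempty_iff_exists_descOf_contains hCS (Set.union_comm R S ▸ hQ)]

lemma exists_descOf_contains_opEdge_iff (hRS : Disjoint R S) (hCS : CS ⊆ S) (hv : v ∈ R) :
    (∃ QS : Classes G S, descOf G S BS CS QS = Desc.contains ∧ OpEdge G (cls G R v) QS.1) ↔
      ∃ w ∈ CS, G.Adj v w := by
  simp only [descOf_eq_contains_iff]
  constructor
  · rintro ⟨QS, ⟨w, hwQ, hwC⟩, hop⟩
    exact ⟨w, hwC, hop v (mem_cls_self hv) w hwQ⟩
  · rintro ⟨w, hwC, hvw⟩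
    exact ⟨⟨cls G S w, cls_mem_eqClasses (hCS hwC)⟩, ⟨w, mem_cls_self (hCS hwC), hwC⟩,
      opEdge_cls_of_adj hRS (hCS hwC) hvw⟩

lemma exists_forall_not_adj_iff_exists_demand (hRS : Disjoint R S) (hCR : CR ⊆ R)
    (hCS : CS ⊆ S) (hBR : BR ⊆ R) (hQ : Q ∈ eqClasses G (R ∪ S))
    (hnc : ¬ (Q ∩ CR).Nonempty) :
    (∃ v ∈ BR ∩ Q, ∀ w ∈ CR ∪ CS, ¬ G.Adj v w) ↔
      ∃ QR : Classes G R, QR.1 ⊆ Q ∧ descOf G R BR CR QR = Desc.demand ∧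
        ∀ QS : Classes G S, OpEdge G QR.1 QS.1 → descOf G S BS CS QS ≠ Desc.contains := by
  simp only [descOf_eq_demand_iff hCR]
  constructor
  · rintro ⟨v, ⟨hvB, hvQ⟩, hv⟩
    have hQv : cls G R v ⊆ Q := eq_cls_of_mem hQ hvQ ▸ cls_subset_cls_union v
    refine ⟨⟨cls G R v, cls_mem_eqClasses (hBR hvB)⟩, hQv,
      ⟨fun h => hnc (h.mono (Set.inter_subset_inter_left _ hQv)),
        v, ⟨hvB, mem_cls_self (hBR hvB)⟩, fun w hw => hv w (Or.inl hw)⟩,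
      fun QS hop hc => ?_⟩
    obtain ⟨w, hwC, hvw⟩ :=
      (exists_descOf_contains_opEdge_iff hRS hCS (hBR hvB)).mp ⟨QS, hc, hop⟩
    exact hv w (Or.inr hwC) hvw
  · rintro ⟨QR, hQR, ⟨-, v, ⟨hvB, hvQ⟩, hvC⟩, hno⟩
    refine ⟨v, ⟨hvB, hQR hvQ⟩, fun w hw hvw => hw.elim (hvC w · hvw) fun hwC => ?_⟩
    obtain ⟨QS, hc, hop⟩ :=
      (exists_descOf_contains_opEdge_iff hRS hCS (hBR hvB)).mpr ⟨w, hwC, hvw⟩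
    exact hno QS (eq_cls_of_mem QR.2 hvQ ▸ hop) hc

lemma exists_indN_union_eq_empty_iff (hRS : Disjoint R S) (hCR : CR ⊆ R) (hCS : CS ⊆ S)
    (hBR : BR ⊆ R) (hBS : BS ⊆ S) (hQ : Q ∈ eqClasses G (R ∪ S))
    (hnc : ¬ (Q ∩ (CR ∪ CS)).Nonempty) :
    (∃ v ∈ (BR ∪ BS) ∩ Q, indN G (R ∪ S) v ∩ (CR ∪ CS) = ∅) ↔
      (∃ QR : Classes G R, QR.1 ⊆ Q ∧ descOf G R BR CR QR = Desc.demand ∧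
        ∀ QS : Classes G S, OpEdge G QR.1 QS.1 → descOf G S BS CS QS ≠ Desc.contains) ∨
      (∃ QS : Classes G S, QS.1 ⊆ Q ∧ descOf G S BS CS QS = Desc.demand ∧
        ∀ QR : Classes G R, OpEdge G QR.1 QS.1 → descOf G R BR CR QR ≠ Desc.contains) := by
  rw [Set.inter_union_distrib_left, Set.union_nonempty, not_or] at hnc
  have hR := exists_forall_not_adj_iff_exists_demand hRS hCR hCS hBR hQ hnc.1 (G := G) (BS := BS)
  have hS := (exists_forall_not_adj_iff_exists_demand hRS.symm hCS hCR hBS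
    (Set.union_comm R S ▸ hQ) hnc.2 (G := G) (BS := BR)).trans <|
      exists_congr fun _ => and_congr_right' <| and_congr_right' <|
        forall_congr' fun _ => imp_congr_left opEdge_comm
  rw [Set.union_comm CS CR] at hS
  simp only [indN_inter_eq_empty_iff (Set.union_subset_union hCR hCS),
    Set.union_inter_distrib_right, Set.mem_union, or_and_right, exists_or] at hR hS ⊢
  exact or_congr hR hS

lemma descOf_union (hRS : Disjoint R S) (hCR : CR ⊆ R) (hCS : CS ⊆ S)
    (hBR : BR ⊆ R) (hBS : BS ⊆ S) (Q : Classes G (R ∪ S)) :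
    descOf G (R ∪ S) (BR ∪ BS) (CR ∪ CS) Q =
      (mergeType G R S (typeOf G R BR CR) (typeOf G S BS CS)).1 Q := by
  have hcontains := union_inter_nonempty_iff hCR hCS Q.2 (BR := BR) (BS := BS)
  simp only [mergeType, typeOf_fst]
  rw [descOf]
  by_cases hnc : (Q.1 ∩ (CR ∪ CS)).Nonempty
  · rw [if_pos hnc]
    exact (if_pos (hcontains.mp hnc)).symm
  · rw [if_neg hnc]
    refine Eq.trans ?_ (if_neg (hcontains.not.mp hnc)).symm
    exact if_congr (exists_indN_union_eq_empty_iff hRS hCR hCS hBR hBS Q.2 hnc) rfl rfl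

lemma union_inter_union_eq (hRS : Disjoint R S) (hCR : CR ⊆ R) (hCS : CS ⊆ S)
    (hBR : BR ⊆ R) (hBS : BS ⊆ S) :
    (CR ∪ CS) ∩ (BR ∪ BS) = (CR ∩ BR) ∪ (CS ∩ BS) := by
  have h₁ : Disjoint CR BS := hRS.mono hCR hBS
  have h₂ : Disjoint CS BR := hRS.symm.mono hCS hBR
  rw [Set.union_inter_distrib_right, Set.inter_union_distrib_left, Set.inter_union_distrib_left,
    h₁.inter_eq, h₂.inter_eq, Set.union_empty, Set.empty_union]

lemma typeOf_union (hRS : Disjoint R S) (hCR : CR ⊆ R) (hCS : CS ⊆ S)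
    (hBR : BR ⊆ R) (hBS : BS ⊆ S) :
    typeOf G (R ∪ S) (BR ∪ BS) (CR ∪ CS) =
      mergeType G R S (typeOf G R BR CR) (typeOf G S BS CS) := by
  refine Prod.ext (funext (descOf_union hRS hCR hCS hBR hBS)) ?_
  rw [Bool.eq_iff_iff, typeOf_snd_eq_true_iff, mergeType, Bool.or_eq_true,
    typeOf_snd_eq_true_iff, typeOf_snd_eq_true_iff, union_inter_union_eq hRS hCR hCS hBR hBS,
    Set.union_nonempty]

lemma exists_contains_opEdge_of_demand (hRS : Disjoint R S) (hCR : CR ⊆ R) (hCS : CS ⊆ S)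
    (hBR : BR ⊆ R) (hval : ValidClass G (R ∪ S) (BR ∪ BS) (CR ∪ CS))
    (hQ : Q ∈ eqClasses G (R ∪ S)) (hQC : (Q ∩ (CR ∪ CS)).Nonempty)
    {QR : Classes G R} (hQR : QR.1 ⊆ Q) (hdem : descOf G R BR CR QR = Desc.demand) :
    ∃ QS : Classes G S, descOf G S BS CS QS = Desc.contains ∧ OpEdge G QR.1 QS.1 := by
  obtain ⟨hnc, v, ⟨hvB, hvQ⟩, hvC⟩ := (descOf_eq_demand_iff hCR).mp hdem
  have hvR := hBR hvB
  rw [eq_cls_of_mem QR.2 hvQ, exists_descOf_contains_opEdge_iff hRS hCS hvR]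
  rcases (validClass_iff (Set.union_subset_union hCR hCS)).mp hval Q hQ hQC v
      ⟨Or.inl hvB, hQR hvQ⟩ with (hv | hv) | ⟨w, hw | hw, hvw⟩
  · exact absurd ⟨v, hvQ, hv⟩ hnc
  · exact absurd (hCS hv) (hRS.notMem_of_mem_left hvR)
  · exact absurd hvw (hvC w hw)
  · exact ⟨w, hw, hvw⟩

lemma compatibleTypes_of_validClass_union (hRS : Disjoint R S) (hCR : CR ⊆ R)
    (hCS : CS ⊆ S) (hBR : BR ⊆ R) (hBS : BS ⊆ S)
    (hind : ∀ u ∈ CR ∪ CS, ∀ v ∈ CR ∪ CS, ¬ G.Adj u v)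
    (hsub : ((CR ∪ CS) ∩ (BR ∪ BS)).Subsingleton)
    (hval : ValidClass G (R ∪ S) (BR ∪ BS) (CR ∪ CS)) :
    CompatibleTypes G R S (typeOf G R BR CR) (typeOf G S BS CS) := by
  simp only [CompatibleTypes, typeOf_fst, typeOf_snd_eq_true_iff]
  refine ⟨?_, ?_, fun Q hcont => ⟨?_, ?_⟩⟩
  · rintro ⟨⟨x, hx⟩, ⟨y, hy⟩⟩
    rw [union_inter_union_eq hRS hCR hCS hBR hBS] at hsub
    have hxy : x = y := hsub (Or.inl hx) (Or.inr hy)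
    exact hRS.notMem_of_mem_left (hCR hx.1) (hxy ▸ hCS hy.1)
  · rintro ⟨QR, QS, hop, hR, hS⟩
    obtain ⟨x, hxQ, hx⟩ := descOf_eq_contains_iff.mp hR
    obtain ⟨y, hyQ, hy⟩ := descOf_eq_contains_iff.mp hS
    exact hind x (Or.inl hx) y (Or.inr hy) (hop x hxQ y hyQ)
  · have hQC := (union_inter_nonempty_iff hCR hCS Q.2).mpr hcont
    exact fun QR hQR hdem =>
      exists_contains_opEdge_of_demand hRS hCR hCS hBR hval Q.2 hQC hQR hdem
  · have hQ : Q.1 ∈ eqClasses G (S ∪ R) := Set.union_comm R S ▸ Q.2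
    have hQC : (Q.1 ∩ (CS ∪ CR)).Nonempty :=
      Set.union_comm CR CS ▸ (union_inter_nonempty_iff hCR hCS Q.2).mpr hcont
    rw [Set.union_comm R S, Set.union_comm BR BS, Set.union_comm CR CS] at hval
    intro QS hQS hdem
    obtain ⟨QR, hc, hop⟩ :=
      exists_contains_opEdge_of_demand hRS.symm hCS hCR hBS hval hQ hQC hQS hdem
    exact ⟨QR, hc, opEdge_comm.mp hop⟩

lemma validClass_left_of_union (hRS : Disjoint R S) (hCR : CR ⊆ R) (hCS : CS ⊆ S)
    (hBR : BR ⊆ R) (hind : ∀ u ∈ CR ∪ CS, ∀ v ∈ CR ∪ CS, ¬ G.Adj u v)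
    (hval : ValidClass G (R ∪ S) (BR ∪ BS) (CR ∪ CS)) : ValidClass G R BR CR := by
  rw [validClass_iff (Set.union_subset_union hCR hCS)] at hval
  rw [validClass_iff hCR]
  rintro Q hQ ⟨x, hxQ, hx⟩ v ⟨hvB, hvQ⟩
  have hxv : x ∈ cls G R v := eq_cls_of_mem hQ hvQ ▸ hxQ
  rcases hval _ (cls_mem_eqClasses (Or.inl (hBR hvB)))
      ⟨x, cls_subset_cls_union v hxv, Or.inl hx⟩
      v ⟨Or.inl hvB, mem_cls_self (Or.inl (hBR hvB))⟩ with (hv | hv) | ⟨w, hw | hw, hvw⟩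
  · exact Or.inl hv
  · exact absurd (hCS hv) (hRS.notMem_of_mem_left (hBR hvB))
  · exact Or.inr ⟨w, hw, hvw⟩
  · exact absurd (adj_of_mem_cls hxv (hRS.notMem_of_mem_right (hCS hw)) hvw)
      (hind x (Or.inl hx) w (Or.inr hw))

lemma mem_or_exists_adj_of_demands_met (hRS : Disjoint R S) (hCR : CR ⊆ R) (hCS : CS ⊆ S)
    (hBR : BR ⊆ R) (hQ : Q ∈ eqClasses G (R ∪ S))
    (hdem : ∀ QR : Classes G R, QR.1 ⊆ Q → descOf G R BR CR QR = Desc.demand →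
      ∃ QS : Classes G S, descOf G S BS CS QS = Desc.contains ∧ OpEdge G QR.1 QS.1)
    (hvalR : ValidClass G R BR CR) (hvB : v ∈ BR) (hvQ : v ∈ Q) :
    v ∈ CR ∪ CS ∨ ∃ w ∈ CR ∪ CS, G.Adj v w := by
  have hvR := hBR hvB
  by_cases hcls : (cls G R v ∩ CR).Nonempty
  · rcases (validClass_iff hCR).mp hvalR _ (cls_mem_eqClasses hvR) hcls v
      ⟨hvB, mem_cls_self hvR⟩ with hv | ⟨w, hw, hvw⟩
    exacts [Or.inl (Or.inl hv), Or.inr ⟨w, Or.inl hw, hvw⟩]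
  by_cases hnbr : ∃ w ∈ CR, G.Adj v w
  · obtain ⟨w, hw, hvw⟩ := hnbr
    exact Or.inr ⟨w, Or.inl hw, hvw⟩
  push Not at hnbr
  have hvdem : descOf G R BR CR ⟨cls G R v, cls_mem_eqClasses hvR⟩ = Desc.demand :=
    (descOf_eq_demand_iff hCR).mpr ⟨hcls, v, ⟨hvB, mem_cls_self hvR⟩, hnbr⟩
  obtain ⟨w, hw, hvw⟩ := (exists_descOf_contains_opEdge_iff hRS hCS hvR).mp
    (hdem _ (eq_cls_of_mem hQ hvQ ▸ cls_subset_cls_union v) hvdem)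
  exact Or.inr ⟨w, Or.inr hw, hvw⟩

lemma validClass_union (hRS : Disjoint R S) (hCR : CR ⊆ R) (hCS : CS ⊆ S)
    (hBR : BR ⊆ R) (hBS : BS ⊆ S)
    (hcomp : CompatibleTypes G R S (typeOf G R BR CR) (typeOf G S BS CS))
    (hvalR : ValidClass G R BR CR) (hvalS : ValidClass G S BS CS) :
    ValidClass G (R ∪ S) (BR ∪ BS) (CR ∪ CS) := by
  rw [validClass_iff (Set.union_subset_union hCR hCS)]
  rintro Q hQ hQC v ⟨hvB, hvQ⟩
  have hdem := hcomp.2.2 ⟨Q, hQ⟩ ((union_inter_nonempty_iff hCR hCS hQ).mp hQC)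
  simp only [typeOf_fst] at hdem
  rcases hvB with hvB | hvB
  · exact mem_or_exists_adj_of_demands_met hRS hCR hCS hBR hQ hdem.1 hvalR hvB hvQ
  · have hQ' : Q ∈ eqClasses G (S ∪ R) := Set.union_comm R S ▸ hQ
    have := mem_or_exists_adj_of_demands_met hRS.symm hCS hCR hBS hQ'
      (fun QS hQS hd => (hdem.2 QS hQS hd).imp fun _ h => ⟨h.1, opEdge_comm.mp h.2⟩)
      hvalS hvB hvQ
    rwa [Set.union_comm CS CR] at this

end Merge

section Coloring

variable {G : SimpleGraph V} {U R S B BR BS : Set V} {k : ℕ}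

lemma inter_union_inter_eq_of_subset {C : Set V} (h : C ⊆ R ∪ S) : C ∩ R ∪ C ∩ S = C := by
  rw [← Set.inter_union_distrib_left, Set.inter_eq_left.mpr h]

lemma indepIn_union (hRS : Disjoint R S) {CR CS : Set V} (hR : IndepIn G R CR)
    (hS : IndepIn G S CS) (hcomp : CompatibleTypes G R S (typeOf G R BR CR) (typeOf G S BS CS)) :
    IndepIn G (R ∪ S) (CR ∪ CS) := by
  have hcross : ∀ u ∈ CR, ∀ v ∈ CS, ¬ G.Adj u v := fun u hu v hv huv =>
    hcomp.2.1 ⟨⟨cls G R u, cls_mem_eqClasses (hR.1 hu)⟩,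
      ⟨cls G S v, cls_mem_eqClasses (hS.1 hv)⟩,
      opEdge_cls_of_adj hRS (hS.1 hv) huv,
      descOf_eq_contains_iff.mpr ⟨u, mem_cls_self (hR.1 hu), hu⟩,
      descOf_eq_contains_iff.mpr ⟨v, mem_cls_self (hS.1 hv), hv⟩⟩
  refine ⟨Set.union_subset_union hR.1 hS.1, ?_⟩
  rintro u (hu | hu) v (hv | hv) huv
  exacts [hR.2 u hu v hv huv, hcross u hu v hv huv, hcross v hv u hu huv.symm, hS.2 u hu v hv huv]

lemma IsPartialBColoring.subset {C : Fin k → Set V} (h : IsPartialBColoring G U C B)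
    (i : Fin k) : C i ⊆ U :=
  (h.2.2.1 i).1

lemma IsPartialBColoring.bVertices_subset {C : Fin k → Set V}
    (h : IsPartialBColoring G U C B) : B ⊆ U :=
  h.2.2.2.1

lemma IsValidPartialBColoring.inter_left (hRS : Disjoint R S) {C : Fin k → Set V}
    (h : IsValidPartialBColoring G (R ∪ S) C B) :
    IsValidPartialBColoring G R (fun i => C i ∩ R) (B ∩ R) := by
  obtain ⟨⟨hcover, hdisj, hind, hB, hsub⟩, hval⟩ := h
  refine ⟨⟨by rw [← Set.iUnion_inter, hcover, Set.union_inter_cancel_left],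
    fun i j hij => (hdisj hij).mono Set.inter_subset_left Set.inter_subset_left,
    fun i => ⟨Set.inter_subset_right, fun u hu v hv => (hind i).2 u hu.1 v hv.1⟩,
    Set.inter_subset_right,
    fun i => (hsub i).anti (Set.inter_subset_inter Set.inter_subset_left Set.inter_subset_left)⟩,
    fun i => ?_⟩
  have hindi := (hind i).2
  have hvali := hval i
  rw [← inter_union_inter_eq_of_subset (hind i).1] at hindi hvali
  rw [← inter_union_inter_eq_of_subset hB] at hvali
  exact validClass_left_of_union hRS Set.inter_subset_right Set.inter_subset_right
    Set.inter_subset_right hindi hvali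

lemma IsValidPartialBColoring.inter_right (hRS : Disjoint R S) {C : Fin k → Set V}
    (h : IsValidPartialBColoring G (R ∪ S) C B) :
    IsValidPartialBColoring G S (fun i => C i ∩ S) (B ∩ S) := by
  rw [Set.union_comm] at h
  exact h.inter_left hRS.symm

lemma typeOf_eq_mergeType_inter (hRS : Disjoint R S) {C : Set V} (hC : C ⊆ R ∪ S)
    (hB : B ⊆ R ∪ S) :
    typeOf G (R ∪ S) B C =
      mergeType G R S (typeOf G R (B ∩ R) (C ∩ R)) (typeOf G S (B ∩ S) (C ∩ S)) := by
  conv_lhs => rw [← inter_union_inter_eq_of_subset hC, ← inter_union_inter_eq_of_subset hB]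
  exact typeOf_union hRS Set.inter_subset_right Set.inter_subset_right
    Set.inter_subset_right Set.inter_subset_right

lemma IsValidPartialBColoring.compatibleTypes_inter (hRS : Disjoint R S) {C : Fin k → Set V}
    (h : IsValidPartialBColoring G (R ∪ S) C B) (i : Fin k) :
    CompatibleTypes G R S (typeOf G R (B ∩ R) (C i ∩ R))
      (typeOf G S (B ∩ S) (C i ∩ S)) := by
  obtain ⟨⟨-, -, hind, hB, hsub⟩, hval⟩ := h
  have hindi := (hind i).2
  have hsubi := hsub i
  have hvali := hval i
  rw [← inter_union_inter_eq_of_subset (hind i).1] at hindi hsubi hvali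
  rw [← inter_union_inter_eq_of_subset hB] at hsubi hvali
  exact compatibleTypes_of_validClass_union hRS Set.inter_subset_right Set.inter_subset_right
    Set.inter_subset_right Set.inter_subset_right hindi hsubi hvali

lemma IsValidPartialBColoring.comp_perm {C : Fin k → Set V}
    (h : IsValidPartialBColoring G U C B) (π : Fin k ≃ Fin k) :
    IsValidPartialBColoring G U (C ∘ π) B := by
  obtain ⟨⟨hcover, hdisj, hind, hB, hsub⟩, hval⟩ := h
  exact ⟨⟨π.surjective.iUnion_comp C ▸ hcover, fun i j hij => hdisj (π.injective.ne hij),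
    fun i => hind (π i), hB, fun i => hsub (π i)⟩, fun i => hval (π i)⟩

lemma IsValidPartialBColoring.union (hRS : Disjoint R S) {CR CS : Fin k → Set V}
    (hR : IsValidPartialBColoring G R CR BR) (hS : IsValidPartialBColoring G S CS BS)
    (hcomp : ∀ i, CompatibleTypes G R S (typeOf G R BR (CR i)) (typeOf G S BS (CS i))) :
    IsValidPartialBColoring G (R ∪ S) (fun i => CR i ∪ CS i) (BR ∪ BS) := by
  obtain ⟨⟨hcoverR, hdisjR, hindR, hBR, hsubR⟩, hvalR⟩ := hR
  obtain ⟨⟨hcoverS, hdisjS, hindS, hBS, hsubS⟩, hvalS⟩ := hS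
  refine ⟨⟨by rw [Set.iUnion_union_distrib, hcoverR, hcoverS], fun i j hij => ?_,
    fun i => indepIn_union hRS (hindR i) (hindS i) (hcomp i), Set.union_subset_union hBR hBS,
    fun i => ?_⟩, fun i => validClass_union hRS (hindR i).1 (hindS i).1 hBR hBS (hcomp i)
      (hvalR i) (hvalS i)⟩
  · exact Disjoint.union_left
      (Disjoint.union_right (hdisjR hij) (hRS.mono (hindR i).1 (hindS j).1))
      (Disjoint.union_right (hRS.symm.mono (hindS i).1 (hindR j).1) (hdisjS hij))
  · rw [union_inter_union_eq hRS (hindR i).1 (hindS i).1 hBR hBS]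
    have hbits := (hcomp i).1
    simp only [typeOf_snd_eq_true_iff, not_and] at hbits
    by_cases hRi : (CR i ∩ BR).Nonempty
    · rw [Set.not_nonempty_iff_eq_empty.mp (hbits hRi), Set.union_empty]
      exact hsubR i
    · rw [Set.not_nonempty_iff_eq_empty.mp hRi, Set.empty_union]
      exact hsubS i

end Coloring

section Signatures

variable [Finite V] {G : SimpleGraph V} {R S : Set V} {ι : Type*} [Fintype ι]

lemma isSignature_sigOf {U B : Set V} {k : ℕ} (C : Fin k → Set V) :
    IsSignature G U k (sigOf G U C B) := by
  unfold IsSignature sigOf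
  simpa [Nat.card_eq_fintype_card] using
    finsum_card_and_eq (fun _ => True) fun i => typeOf G U B (C i)

lemma compatibleSignatures_card_fiber (d : ι → UType G R × UType G S)
    (hd : ∀ i, CompatibleTypes G R S (d i).1 (d i).2) :
    CompatibleSignatures G R S (fun τ => Nat.card {i // mergeType G R S (d i).1 (d i).2 = τ})
      (fun ρ => Nat.card {i // (d i).1 = ρ}) (fun σ => Nat.card {i // (d i).2 = σ}) := by
  refine ⟨fun p => Nat.card {i // d i = p}, fun p hp => ?_, fun ρ => ?_, fun σ => ?_,
    finsum_mem_card_fiber d fun p => mergeType G R S p.1 p.2⟩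
  · have : IsEmpty {i // d i = p} := ⟨fun ⟨i, hi⟩ => hp (hi ▸ hd i)⟩
    exact Nat.card_of_isEmpty
  · simpa only [Prod.ext_iff] using finsum_card_and_eq (fun i => (d i).1 = ρ) fun i => (d i).2
  · simpa only [Prod.ext_iff, and_comm] using
      finsum_card_and_eq (fun i => (d i).2 = σ) fun i => (d i).1

lemma exists_perm_of_compatibleSignatures {σT : UType G (R ∪ S) → ℕ}
    {σR : UType G R → ℕ} {σS : UType G S → ℕ} (h : CompatibleSignatures G R S σT σR σS)
    (a : ι → UType G R) (b : ι → UType G S) (ha : ∀ ρ, Nat.card {i // a i = ρ} = σR ρ)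
    (hb : ∀ σ, Nat.card {i // b i = σ} = σS σ) :
    ∃ π : ι ≃ ι, (∀ i, CompatibleTypes G R S (a i) (b (π i))) ∧
      ∀ τ, Nat.card {i // mergeType G R S (a i) (b (π i)) = τ} = σT τ := by
  obtain ⟨f, hf0, hfR, hfS, hfT⟩ := h
  obtain ⟨π, hπ⟩ := exists_perm_card_fiber_pair_eq a b f
    (fun ρ => (hfR ρ).trans (ha ρ).symm) (fun σ => (hfS σ).trans (hb σ).symm)
  refine ⟨π, fun i => ?_, fun τ => ?_⟩
  · by_contra hi
    have hpos : 0 < Nat.card {j // (a j, b (π j)) = (a i, b (π i))} :=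
      Finite.card_pos_iff.mpr ⟨⟨i, rfl⟩⟩
    rw [hπ, hf0 _ hi] at hpos
    exact hpos.false
  · rw [← hfT τ]
    simp only [← hπ]
    exact (finsum_mem_card_fiber (fun i => (a i, b (π i)))
      (fun p => mergeType G R S p.1 p.2) τ).symm

end Signatures

theorem dp_step_correct_general {V : Type*} [Fintype V] (G : SimpleGraph V)
    (R S : Set V) (hRS : Disjoint R S) (k : ℕ)
    (σT : UType G (R ∪ S) → ℕ) :
    (∃ (C : Fin k → Set V) (B : Set V),
        IsValidPartialBColoring G (R ∪ S) C B ∧ sigOf G (R ∪ S) C B = σT) ↔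
    (∃ (σR : UType G R → ℕ) (σS : UType G S → ℕ),
        IsSignature G R k σR ∧ IsSignature G S k σS ∧
        CompatibleSignatures G R S σT σR σS ∧
        (∃ (C : Fin k → Set V) (B : Set V),
          IsValidPartialBColoring G R C B ∧ sigOf G R C B = σR) ∧
        (∃ (C : Fin k → Set V) (B : Set V),
          IsValidPartialBColoring G S C B ∧ sigOf G S C B = σS)) := by
  constructor
  · rintro ⟨C, B, hC, rfl⟩
    refine ⟨_, _, isSignature_sigOf _, isSignature_sigOf _, ?_,
      ⟨_, _, hC.inter_left hRS, rfl⟩, ⟨_, _, hC.inter_right hRS, rfl⟩⟩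
    have hmerge : ∀ i, typeOf G (R ∪ S) B (C i) =
        mergeType G R S (typeOf G R (B ∩ R) (C i ∩ R)) (typeOf G S (B ∩ S) (C i ∩ S)) :=
      fun i => typeOf_eq_mergeType_inter hRS (hC.1.subset i) hC.1.bVertices_subset
    have := compatibleSignatures_card_fiber
      (fun i => (typeOf G R (B ∩ R) (C i ∩ R), typeOf G S (B ∩ S) (C i ∩ S)))
      (hC.compatibleTypes_inter hRS)
    simp only [← hmerge] at this
    exact this
  · rintro ⟨σR, σS, -, -, hcomp, ⟨CR, BR, hR, rfl⟩, ⟨CS, BS, hS, rfl⟩⟩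
    obtain ⟨π, hπc, hπT⟩ :=
      exists_perm_of_compatibleSignatures hcomp _ _ (fun _ => rfl) (fun _ => rfl)
    refine ⟨_, _, hR.union hRS (hS.comp_perm π) hπc, funext fun τ => ?_⟩
    rw [← hπT τ]
    exact Nat.card_congr <| Equiv.subtypeEquivRight fun i => by
      rw [← typeOf_union hRS (hR.1.subset i) (hS.1.subset (π i)) hR.1.bVertices_subset
        hS.1.bVertices_subset]
      exact Iff.rfl

/-- Correctness of the dynamic-programming step. Let `R, S` be disjoint vertex subsets
of a finite graph `G` and `T = R ∪ S`. For every `T`-signature `σT`: there is a valid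
partial `b`-coloring of `G[T]` with `k` colors whose `T`-signature is `σT` if and only
if there are an `R`-signature `σR` and an `S`-signature `σS` such that the triple
`(σT, σR, σS)` is compatible, there is a valid partial `b`-coloring of `G[R]` with `k`
colors whose `R`-signature is `σR`, and there is a valid partial `b`-coloring of `G[S]`
with `k` colors whose `S`-signature is `σS`. -/
theorem dp_step_correct {V : Type*} [Fintype V] [DecidableEq V] (G : SimpleGraph V)
    (R S : Set V) (hRS : Disjoint R S) (k : ℕ)
    (σT : UType G (R ∪ S) → ℕ) (hσT : IsSignature G (R ∪ S) k σT) :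
    (∃ (C : Fin k → Set V) (B : Set V),
        IsValidPartialBColoring G (R ∪ S) C B ∧ sigOf G (R ∪ S) C B = σT) ↔
    (∃ (σR : UType G R → ℕ) (σS : UType G S → ℕ),
        IsSignature G R k σR ∧ IsSignature G S k σS ∧
        CompatibleSignatures G R S σT σR σS ∧
        (∃ (C : Fin k → Set V) (B : Set V),
          IsValidPartialBColoring G R C B ∧ sigOf G R C B = σR) ∧
        (∃ (C : Fin k → Set V) (B : Set V),
          IsValidPartialBColoring G S C B ∧ sigOf G S C B = σS)) :=
  dp_step_correct_general G R S hRS k σT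

end BCol
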